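/- Let b₂ > b₁ > 0 and let θ_{b₁}, θ_{b₂} be the respective minimizers of E_{b₁}, E_{b₂} (both with range in [0, π/2)). Then θ_{b₂}(s) ≥ θ_{b₁}(s) for all s ∈ [0,1]; in fact θ_{b₂}(s) > θ_{b₁}(s) for s ∈ (0,1]. -/

import Mathlib

/-!
Testing minimality against `θ + ε ∫₀ˢ g` for continuous `g` gives the weak Euler–Lagrange
equation; integrating by parts and applying du Bois-Reymond yields
`θ'(s) = ∫ₛ¹ b(1-σ) cos θ(σ) dσ`, so a minimizer agrees on `[0, 1]` with a classical `C²`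
solution.

For the comparison let `φ = θ₂ - θ₁`, so `φ(0) = 0`, `φ'(1) = 0` and
`φ'' = -(1-s)(b₂ cos θ₂ - b₁ cos θ₁)`, which is negative wherever `θ₂ ≤ θ₁` because `cos`
decreases on `[0, π/2)` and `b₂ > b₁`. If `φ ≤ 0` somewhere in `(0, 1]`, then `φ` attains its
minimum over `[0, 1]` at such a point `m > 0`, where `φ'(m) = 0`; strict concavity of `φ` just to
the left of `m` makes `φ` smaller there, a contradiction.
-/

open MeasureTheory Real Set

/-- Total energy `E(θ) = (1/2)∫₀¹ θ'² − b ∫₀¹ (1−s) sin θ(s) ds`,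
where `θ'` is the (weak) derivative of `θ`. -/
noncomputable def energy (b : ℝ) (θ θ' : ℝ → ℝ) : ℝ :=
  (1/2) * (∫ s in (0:ℝ)..1, (θ' s)^2) - b * ∫ s in (0:ℝ)..1, (1 - s) * Real.sin (θ s)

/-- `θ ∈ H¹([0,1])` with `θ(0) = 0`, represented by a square-integrable weak
derivative `θ'` of which `θ` is the primitive. -/
def InH101 (θ θ' : ℝ → ℝ) : Prop :=
  (∀ s ∈ Set.Icc (0:ℝ) 1, θ s = ∫ t in (0:ℝ)..s, θ' t) ∧
  IntervalIntegrable θ' MeasureTheory.volume 0 1 ∧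
  IntervalIntegrable (fun s => (θ' s)^2) MeasureTheory.volume 0 1

/-- `θ` is a global minimizer of the energy `E_b` on `H¹_{0,1}`. -/
def IsMinimizer (b : ℝ) (θ θ' : ℝ → ℝ) : Prop :=
  InH101 θ θ' ∧ ∀ ψ ψ', InH101 ψ ψ' → energy b θ θ' ≤ energy b ψ ψ'

/-- A classical solution of the Euler–Lagrange boundary value problem
`θ'' = −b(1−s) cos θ`, `θ(0) = 0`, `θ'(1) = 0`. -/
def ClassicalSolution (b : ℝ) (θ : ℝ → ℝ) : Prop :=
  ContDiff ℝ 2 θ ∧ θ 0 = 0 ∧ deriv θ 1 = 0 ∧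
  ∀ s ∈ Set.Icc (0:ℝ) 1, deriv (deriv θ) s = -b * (1 - s) * Real.cos (θ s)

lemma abs_sin_add_sub_sin_sub_mul_cos_le (x h : ℝ) :
    |sin (x + h) - sin x - h * cos x| ≤ h ^ 2 := by
  have hderiv : ∀ t ∈ uIcc x (x + h),
      HasDerivWithinAt (fun t => sin t - t * cos x) (cos t - cos x) (uIcc x (x + h)) t :=
    fun t _ => ((hasDerivAt_sin t).sub ((hasDerivAt_id t).mul_const (cos x))).hasDerivWithinAt
      |>.congr_deriv (by simp)
  have hbound : ∀ t ∈ uIcc x (x + h), ‖cos t - cos x‖ ≤ |h| := fun t ht =>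
    (abs_cos_sub_cos_le t x).trans (by simpa using abs_sub_left_of_mem_uIcc ht)
  have := Convex.norm_image_sub_le_of_norm_hasDerivWithin_le hderiv hbound (convex_uIcc _ _)
    left_mem_uIcc right_mem_uIcc
  calc |sin (x + h) - sin x - h * cos x|
      = ‖(sin (x + h) - (x + h) * cos x) - (sin x - x * cos x)‖ := by
        rw [Real.norm_eq_abs]; ring_nf
    _ ≤ |h| * ‖x + h - x‖ := this
    _ = h ^ 2 := by simp [← sq]

lemma eq_zero_of_forall_mul_add_sq_mul_nonneg {A C : ℝ} (h : ∀ ε, 0 ≤ ε * A + ε ^ 2 * C) :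
    A = 0 := by
  have hpos : 0 < |C| + 1 := by positivity
  have key := h (-A / (|C| + 1))
  rw [div_pow, neg_sq, ← sub_nonneg] at key
  have : A ^ 2 * (|C| + 1) ≤ A ^ 2 * C := by
    field_simp at key
    nlinarith [le_abs_self C]
  nlinarith [le_abs_self C, sq_nonneg A]

lemma Continuous.integral_hasDerivAt_left {F : ℝ → ℝ} (hF : Continuous F) (b t : ℝ) :
    HasDerivAt (fun t => ∫ σ in t..b, F σ) (-F t) t :=
  intervalIntegral.integral_hasDerivAt_left (hF.intervalIntegrable _ _)
    (hF.stronglyMeasurableAtFilter _ _) hF.continuousAt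

open intervalIntegral in
lemma integral_mul_primitive_eq_integral_primitive_mul {F g : ℝ → ℝ} (hF : Continuous F)
    (hg : Continuous g) (a b : ℝ) :
    ∫ s in a..b, F s * ∫ t in a..s, g t = ∫ t in a..b, (∫ s in t..b, F s) * g t := by
  have hu : ∀ t, HasDerivAt (fun t => ∫ s in t..b, F s) (-F t) t :=
    hF.integral_hasDerivAt_left b
  have hv : ∀ s, HasDerivAt (fun s => ∫ t in a..s, g t) (g s) s := fun s =>
    (hg.integral_hasStrictDerivAt a s).hasDerivAt
  have hu_cont : Continuous fun t => ∫ s in t..b, F s :=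
    continuous_iff_continuousAt.2 fun t => (hu t).continuousAt
  have hv_cont : Continuous fun s => ∫ t in a..s, g t :=
    continuous_iff_continuousAt.2 fun s => (hv s).continuousAt
  have hparts := integral_deriv_mul_eq_sub (fun t _ => hu t) (fun s _ => hv s)
    (hF.neg.intervalIntegrable a b) (hg.intervalIntegrable a b)
  simp only [integral_same, mul_zero, zero_mul, sub_zero, neg_mul] at hparts
  rw [integral_add (f := fun s => -(F s * ∫ t in a..s, g t))
    (g := fun t => (∫ s in t..b, F s) * g t) (((hF.mul hv_cont).neg).intervalIntegrable _ _)
    ((hu_cont.mul hg).intervalIntegrable _ _), intervalIntegral.integral_neg] at hparts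
  linarith

lemma ae_eq_zero_of_forall_intervalIntegral_mul_eq_zero {f : ℝ → ℝ} {a b : ℝ} (hab : a ≤ b)
    (hf : IntervalIntegrable f volume a b)
    (h : ∀ g : ℝ → ℝ, Continuous g → ∫ x in a..b, f x * g x = 0) :
    ∀ᵐ x, x ∈ Ioc a b → f x = 0 := by
  have hzero : ∀ᵐ x, (Ioc a b).indicator f x = 0 := by
    refine ae_eq_zero_of_integral_contDiff_smul_eq_zero
      ((hf.1.integrable_indicator measurableSet_Ioc).locallyIntegrable) fun g hg _ => ?_
    simp_rw [smul_eq_mul, ← indicator_mul_right]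
    rw [integral_indicator measurableSet_Ioc, ← intervalIntegral.integral_of_le hab]
    simpa only [mul_comm] using h g hg.continuous
  filter_upwards [hzero] with x hx hmem
  rwa [indicator_of_mem hmem] at hx

lemma lt_of_hasDerivAt_of_deriv_neg_of_eq_zero {f f' f'' : ℝ → ℝ} {a b : ℝ} (hab : a < b)
    (hf : ∀ x ∈ Icc a b, HasDerivAt f (f' x) x) (hf' : ∀ x ∈ Icc a b, HasDerivAt f' (f'' x) x)
    (hf'' : ∀ x ∈ Ioo a b, f'' x < 0) (hb : f' b = 0) : f a < f b := by
  have hanti : StrictAntiOn f' (Icc a b) :=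
    strictAntiOn_of_hasDerivWithinAt_neg (convex_Icc a b)
      (fun x hx => (hf' x hx).continuousAt.continuousWithinAt)
      (fun x hx => (hf' x (interior_subset hx)).hasDerivWithinAt)
      (fun x hx => hf'' x (by rwa [interior_Icc] at hx))
  have hmono : StrictMonoOn f (Icc a b) :=
    strictMonoOn_of_hasDerivWithinAt_pos (convex_Icc a b)
      (fun x hx => (hf x hx).continuousAt.continuousWithinAt)
      (fun x hx => (hf x (interior_subset hx)).hasDerivWithinAt)
      (fun x hx => by
        rw [interior_Icc] at hx
        simpa [hb] using hanti (Ioo_subset_Icc_self hx) (right_mem_Icc.2 hab.le) hx.2)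
  exact hmono (left_mem_Icc.2 hab.le) (right_mem_Icc.2 hab.le) hab

lemma abs_integral_sin_add_sub_le {θ φ : ℝ → ℝ} (hθ : ContinuousOn θ (Icc 0 1))
    (hφ : Continuous φ) :
    |(∫ s in (0:ℝ)..1, (1 - s) * sin (θ s + φ s)) - (∫ s in (0:ℝ)..1, (1 - s) * sin (θ s))
      - ∫ s in (0:ℝ)..1, (1 - s) * cos (θ s) * φ s| ≤ ∫ s in (0:ℝ)..1, φ s ^ 2 := by
  have hw : ContinuousOn (fun s : ℝ => 1 - s) (Icc 0 1) :=
    (continuous_const.sub continuous_id).continuousOn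
  have hsin₁ : ContinuousOn (fun s => sin (θ s + φ s)) (Icc 0 1) :=
    continuous_sin.comp_continuousOn (hθ.add hφ.continuousOn)
  have hsin₀ : ContinuousOn (fun s => sin (θ s)) (Icc 0 1) :=
    continuous_sin.comp_continuousOn hθ
  have hcos : ContinuousOn (fun s => cos (θ s)) (Icc 0 1) :=
    continuous_cos.comp_continuousOn hθ
  let R s := sin (θ s + φ s) - sin (θ s) - φ s * cos (θ s)
  have hR : ContinuousOn (fun s => |(1 - s) * R s|) (Icc 0 1) :=
    (hw.mul ((hsin₁.sub hsin₀).sub (hφ.continuousOn.mul hcos))).abs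
  have hi₁ : IntervalIntegrable (fun s => (1 - s) * sin (θ s + φ s)) volume 0 1 :=
    (hw.mul hsin₁).intervalIntegrable_of_Icc zero_le_one
  have hi₀ : IntervalIntegrable (fun s => (1 - s) * sin (θ s)) volume 0 1 :=
    (hw.mul hsin₀).intervalIntegrable_of_Icc zero_le_one
  have hi : IntervalIntegrable (fun s => (1 - s) * cos (θ s) * φ s) volume 0 1 :=
    ((hw.mul hcos).mul hφ.continuousOn).intervalIntegrable_of_Icc zero_le_one
  calc _ = |∫ s in (0:ℝ)..1, (1 - s) * R s| := by
        rw [← intervalIntegral.integral_sub hi₁ hi₀,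
          ← intervalIntegral.integral_sub (hi₁.sub hi₀) hi]
        congr 2; funext s; ring
    _ ≤ ∫ s in (0:ℝ)..1, |(1 - s) * R s| :=
        intervalIntegral.abs_integral_le_integral_abs zero_le_one
    _ ≤ ∫ s in (0:ℝ)..1, φ s ^ 2 := by
        refine intervalIntegral.integral_mono_on zero_le_one
          (hR.intervalIntegrable_of_Icc zero_le_one) ((hφ.pow 2).intervalIntegrable _ _)
          fun s hs => ?_
        rw [abs_mul, abs_of_nonneg (sub_nonneg.2 hs.2)]
        calc (1 - s) * |R s| ≤ 1 * φ s ^ 2 := mul_le_mul (by linarith [hs.1])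
              (by simpa [R] using abs_sin_add_sub_sin_sub_mul_cos_le (θ s) (φ s))
              (abs_nonneg _) zero_le_one
          _ = φ s ^ 2 := one_mul _

namespace InH101

variable {θ θ' : ℝ → ℝ}

lemma continuousOn (h : InH101 θ θ') : ContinuousOn θ (Icc 0 1) := by
  have := intervalIntegral.continuousOn_primitive_interval' h.2.1 left_mem_uIcc
  rw [uIcc_of_le zero_le_one] at this
  exact this.congr h.1

lemma add_const_mul_primitive (h : InH101 θ θ') {g : ℝ → ℝ} (hg : Continuous g) (ε : ℝ) :
    InH101 (fun s => θ s + ε * ∫ t in (0:ℝ)..s, g t) (fun s => θ' s + ε * g s) := by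
  obtain ⟨hprim, hθ', hθ'2⟩ := h
  have hg' : Continuous fun s => ε * g s := continuous_const.mul hg
  refine ⟨fun s hs => ?_, hθ'.add (hg'.intervalIntegrable _ _), ?_⟩
  · have hsub : uIcc 0 s ⊆ uIcc (0:ℝ) 1 :=
      uIcc_subset_uIcc_left (by simpa [uIcc_of_le zero_le_one] using hs)
    dsimp only
    rw [intervalIntegral.integral_add (hθ'.mono_set hsub) (hg'.intervalIntegrable _ _),
      intervalIntegral.integral_const_mul, hprim s hs]
  · have : (fun s => (θ' s + ε * g s) ^ 2)
        = fun s => θ' s ^ 2 + (2 * ε) * (θ' s * g s) + ε ^ 2 * g s ^ 2 := by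
      funext s; ring
    rw [this]
    exact (hθ'2.add ((hθ'.mul_continuousOn hg.continuousOn).const_mul _)).add
      (((hg.pow 2).intervalIntegrable _ _).const_mul _)

end InH101

lemma energy_add_const_mul_primitive_sub_le {θ θ' g : ℝ → ℝ} (b ε : ℝ) (hθ : InH101 θ θ')
    (hg : Continuous g) :
    energy b (fun s => θ s + ε * ∫ t in (0:ℝ)..s, g t) (fun s => θ' s + ε * g s) - energy b θ θ'
      ≤ ε * ((∫ s in (0:ℝ)..1, θ' s * g s)
          - b * ∫ s in (0:ℝ)..1, (1 - s) * cos (θ s) * ∫ t in (0:ℝ)..s, g t)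
        + ε ^ 2 * ((1 / 2) * (∫ s in (0:ℝ)..1, g s ^ 2)
          + |b| * ∫ s in (0:ℝ)..1, (∫ t in (0:ℝ)..s, g t) ^ 2) := by
  set φ := fun s => ∫ t in (0:ℝ)..s, g t
  have hφ : Continuous φ :=
    intervalIntegral.continuous_primitive (fun _ _ => hg.intervalIntegrable _ _) 0
  have hθ'g := hθ.2.1.mul_continuousOn hg.continuousOn
  have hg2 : IntervalIntegrable (fun s => g s ^ 2) volume 0 1 := (hg.pow 2).intervalIntegrable _ _
  have hquad : ∫ s in (0:ℝ)..1, (θ' s + ε * g s) ^ 2 = (∫ s in (0:ℝ)..1, θ' s ^ 2)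
      + 2 * ε * (∫ s in (0:ℝ)..1, θ' s * g s) + ε ^ 2 * ∫ s in (0:ℝ)..1, g s ^ 2 := by
    calc _ = ∫ s in (0:ℝ)..1, θ' s ^ 2 + 2 * ε * (θ' s * g s) + ε ^ 2 * g s ^ 2 := by
          congr 1; funext s; ring
      _ = _ := by
          rw [intervalIntegral.integral_add (hθ.2.2.add (hθ'g.const_mul _)) (hg2.const_mul _),
            intervalIntegral.integral_add hθ.2.2 (hθ'g.const_mul _),
            intervalIntegral.integral_const_mul, intervalIntegral.integral_const_mul]
  have hsin := abs_integral_sin_add_sub_le hθ.continuousOn (hφ.const_mul ε)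
  have hlin : ∫ s in (0:ℝ)..1, (1 - s) * cos (θ s) * (ε * φ s)
      = ε * ∫ s in (0:ℝ)..1, (1 - s) * cos (θ s) * φ s := by
    rw [← intervalIntegral.integral_const_mul]; congr 1; funext s; ring
  have hsq : ∫ s in (0:ℝ)..1, (ε * φ s) ^ 2 = ε ^ 2 * ∫ s in (0:ℝ)..1, φ s ^ 2 := by
    rw [← intervalIntegral.integral_const_mul]; congr 1; funext s; ring
  rw [hlin, hsq] at hsin
  have hremainder : -(b * ((∫ s in (0:ℝ)..1, (1 - s) * sin (θ s + ε * φ s))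
      - (∫ s in (0:ℝ)..1, (1 - s) * sin (θ s))
      - ε * ∫ s in (0:ℝ)..1, (1 - s) * cos (θ s) * φ s))
      ≤ |b| * (ε ^ 2 * ∫ s in (0:ℝ)..1, φ s ^ 2) :=
    (neg_le_abs _).trans (by rw [abs_mul]; exact mul_le_mul_of_nonneg_left hsin (abs_nonneg b))
  simp only [energy, hquad]
  linarith

lemma classicalSolution_of_eq_integral_integral {b : ℝ} {θ : ℝ → ℝ} (hθ : Continuous θ)
    (hfix : ∀ s ∈ Icc (0:ℝ) 1,
      θ s = ∫ t in (0:ℝ)..s, ∫ σ in t..1, b * (1 - σ) * cos (θ σ)) :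
    ClassicalSolution b fun s => ∫ t in (0:ℝ)..s, ∫ σ in t..1, b * (1 - σ) * cos (θ σ) := by
  set F := fun σ => b * (1 - σ) * cos (θ σ)
  have hF : Continuous F := (continuous_const.mul (continuous_const.sub continuous_id)).mul
    (continuous_cos.comp hθ)
  set G := fun t => ∫ σ in t..1, F σ
  have hG : ∀ t, HasDerivAt G (-F t) t := hF.integral_hasDerivAt_left 1
  have hGc : Continuous G := continuous_iff_continuousAt.2 fun t => (hG t).continuousAt
  have hu : ∀ s, HasDerivAt (fun s => ∫ t in (0:ℝ)..s, G t) (G s) s := fun s =>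
    (hGc.integral_hasStrictDerivAt 0 s).hasDerivAt
  have hderiv : deriv (fun s => ∫ t in (0:ℝ)..s, G t) = G := funext fun s => (hu s).deriv
  have hderiv2 : deriv G = fun t => -F t := funext fun t => (hG t).deriv
  refine ⟨?_, intervalIntegral.integral_same, ?_, fun s hs => ?_⟩
  · rw [show (2 : WithTop ℕ∞) = 1 + 1 from rfl, contDiff_succ_iff_deriv, hderiv,
      contDiff_one_iff_deriv, hderiv2]
    exact ⟨fun s => (hu s).differentiableAt, by simp, fun t => (hG t).differentiableAt, hF.neg⟩
  · rw [hderiv]; exact intervalIntegral.integral_same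
  · simp only [hderiv, hderiv2, F, ← hfix s hs]; ring

lemma IsMinimizer.integral_mul_eq {b : ℝ} {θ θ' g : ℝ → ℝ} (h : IsMinimizer b θ θ')
    (hg : Continuous g) :
    ∫ s in (0:ℝ)..1, θ' s * g s
      = b * ∫ s in (0:ℝ)..1, (1 - s) * cos (θ s) * ∫ t in (0:ℝ)..s, g t :=
  sub_eq_zero.1 <| eq_zero_of_forall_mul_add_sq_mul_nonneg fun ε =>
    (sub_nonneg.2 (h.2 _ _ (h.1.add_const_mul_primitive hg ε))).trans
      (energy_add_const_mul_primitive_sub_le b ε h.1 hg)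

theorem IsMinimizer.exists_classicalSolution {b : ℝ} {θ θ' : ℝ → ℝ} (h : IsMinimizer b θ θ') :
    ∃ u, ClassicalSolution b u ∧ EqOn θ u (Icc 0 1) := by
  -- `θ` is only controlled on `[0, 1]`; extend it continuously so all integrands are continuous.
  set θc := IccExtend zero_le_one ((Icc 0 1).domRestrict θ)
  have hθc : Continuous θc := h.1.continuousOn.domRestrict.Icc_extend'
  have hθc_eq : EqOn θc θ (Icc 0 1) := fun s hs => IccExtend_of_mem _ _ hs
  set F := fun σ => b * (1 - σ) * cos (θc σ)
  have hF : Continuous F := (continuous_const.mul (continuous_const.sub continuous_id)).mul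
    (continuous_cos.comp hθc)
  set G := fun t => ∫ σ in t..1, F σ
  have hGc : Continuous G :=
    continuous_iff_continuousAt.2 fun t => (hF.integral_hasDerivAt_left 1 t).continuousAt
  have horth : ∀ g : ℝ → ℝ, Continuous g → ∫ s in (0:ℝ)..1, (θ' s - G s) * g s = 0 := by
    intro g hg
    have hweak : ∫ s in (0:ℝ)..1, θ' s * g s = ∫ s in (0:ℝ)..1, G s * g s := by
      rw [h.integral_mul_eq hg, ← integral_mul_primitive_eq_integral_primitive_mul hF hg,
        ← intervalIntegral.integral_const_mul]
      refine intervalIntegral.integral_congr fun s hs => ?_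
      rw [uIcc_of_le zero_le_one] at hs
      simp only [F, hθc_eq hs]
      ring
    simp_rw [sub_mul]
    rw [intervalIntegral.integral_sub (g := fun s => G s * g s)
      (h.1.2.1.mul_continuousOn hg.continuousOn) ((hGc.mul hg).intervalIntegrable _ _), hweak,
      sub_self]
  have hae := ae_eq_zero_of_forall_intervalIntegral_mul_eq_zero zero_le_one
    (h.1.2.1.sub (hGc.intervalIntegrable _ _)) horth
  have hfix : ∀ s ∈ Icc (0:ℝ) 1, θ s = ∫ t in (0:ℝ)..s, G t := by
    intro s hs
    rw [h.1.1 s hs]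
    refine intervalIntegral.integral_congr_ae ?_
    filter_upwards [hae] with t ht hts
    rw [uIoc_of_le hs.1] at hts
    exact sub_eq_zero.1 (ht ⟨hts.1, hts.2.trans hs.2⟩)
  refine ⟨_, classicalSolution_of_eq_integral_integral hθc fun s hs => ?_, fun s hs => ?_⟩
  · rw [hθc_eq hs]; exact hfix s hs
  · exact (hfix s hs).trans (by simp only [G, F])

namespace ClassicalSolution

variable {b b₁ b₂ : ℝ} {u u₁ u₂ : ℝ → ℝ}

lemma hasDerivAt (h : ClassicalSolution b u) (s : ℝ) : HasDerivAt u (deriv u s) s :=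
  (h.1.differentiable (by norm_num) s).hasDerivAt

lemma hasDerivAt_deriv (h : ClassicalSolution b u) (s : ℝ) :
    HasDerivAt (deriv u) (deriv (deriv u) s) s :=
  (h.1.differentiable_deriv_two s).hasDerivAt

lemma exists_sub_lt_sub_of_deriv_eq (hb₂ : 0 ≤ b₂) (hb : b₁ < b₂)
    (h₁ : ClassicalSolution b₁ u₁) (h₂ : ClassicalSolution b₂ u₂) {s : ℝ} (hs : s ∈ Ioc 0 1)
    (hu₁ : u₁ s < π / 2) (hu₂ : 0 ≤ u₂ s) (hle : u₂ s ≤ u₁ s)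
    (hcrit : deriv u₂ s = deriv u₁ s) : ∃ t ∈ Ico 0 s, u₂ t - u₁ t < u₂ s - u₁ s := by
  set h := fun σ => b₂ * cos (u₂ σ) - b₁ * cos (u₁ σ)
  have hpos : 0 < h s := by
    have hcos₁ : 0 < cos (u₁ s) := cos_pos_of_mem_Ioo ⟨by linarith [pi_pos], hu₁⟩
    have hcos : cos (u₁ s) ≤ cos (u₂ s) :=
      cos_le_cos_of_nonneg_of_le_pi hu₂ (by linarith [pi_pos]) hle
    nlinarith
  have hcont : Continuous h :=
    (continuous_const.mul (continuous_cos.comp h₂.1.continuous)).sub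
      (continuous_const.mul (continuous_cos.comp h₁.1.continuous))
  obtain ⟨l, r, ⟨hl, hr⟩, hlr⟩ :=
    mem_nhds_iff_exists_Ioo_subset.1 ((hcont.tendsto s).eventually (lt_mem_nhds hpos))
  have ha : max l 0 < s := max_lt hl hs.1
  refine ⟨max l 0, ⟨le_max_right _ _, ha⟩, lt_of_hasDerivAt_of_deriv_neg_of_eq_zero ha
    (f'' := fun σ => -((1 - σ) * h σ)) (fun σ _ => (h₂.hasDerivAt σ).sub (h₁.hasDerivAt σ))
    (fun σ hσ => ?_) (fun σ hσ => ?_) (sub_eq_zero.2 hcrit)⟩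
  · have hσ' : σ ∈ Icc (0:ℝ) 1 := ⟨(le_max_right _ _).trans hσ.1, hσ.2.trans hs.2⟩
    refine ((h₂.hasDerivAt_deriv σ).sub (h₁.hasDerivAt_deriv σ)).congr_deriv ?_
    rw [h₂.2.2.2 σ hσ', h₁.2.2.2 σ hσ']
    ring
  · have h1σ : 0 < 1 - σ := by linarith [hσ.2, hs.2]
    have hhσ : 0 < h σ := hlr ⟨(le_max_left _ _).trans_lt hσ.1, hσ.2.trans hr⟩
    have := mul_pos h1σ hhσ
    linarith

theorem lt_of_coeff_lt (hb₂ : 0 ≤ b₂) (hb : b₁ < b₂)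
    (h₁ : ClassicalSolution b₁ u₁) (h₂ : ClassicalSolution b₂ u₂)
    (hu₁ : ∀ s ∈ Icc (0:ℝ) 1, u₁ s < π / 2) (hu₂ : ∀ s ∈ Icc (0:ℝ) 1, 0 ≤ u₂ s) :
    ∀ s ∈ Ioc (0:ℝ) 1, u₁ s < u₂ s := by
  intro s hs
  by_contra! hle
  set φ := fun σ => u₂ σ - u₁ σ
  obtain ⟨m₀, hm₀, hmin₀⟩ := isCompact_Icc.exists_isMinOn (nonempty_Icc.2 zero_le_one)
    (h₂.1.continuous.sub h₁.1.continuous).continuousOn (f := φ)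
  obtain ⟨m, hm, hmin, hφm⟩ : ∃ m ∈ Ioc (0:ℝ) 1, IsMinOn φ (Icc 0 1) m ∧ φ m ≤ 0 := by
    rcases hm₀.1.eq_or_lt with rfl | hm₀pos
    · -- a minimum at `0` is `0`, so `s` is a minimizer as well
      have hφ0 : φ 0 = 0 := by simp [φ, h₁.2.1, h₂.2.1]
      exact ⟨s, hs, fun t ht => (sub_nonpos.2 hle).trans (hφ0 ▸ hmin₀ ht), sub_nonpos.2 hle⟩
    · exact ⟨m₀, ⟨hm₀pos, hm₀.2⟩, hmin₀, (hmin₀ ⟨hs.1.le, hs.2⟩).trans (sub_nonpos.2 hle)⟩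
  have hcrit : deriv u₂ m = deriv u₁ m := by
    rcases hm.2.eq_or_lt with rfl | hm₁
    · rw [h₁.2.2.1, h₂.2.2.1]
    · exact sub_eq_zero.1 ((hmin.isLocalMin (Icc_mem_nhds hm.1 hm₁)).hasDerivAt_eq_zero
        ((h₂.hasDerivAt m).sub (h₁.hasDerivAt m)))
  have hmI : m ∈ Icc (0:ℝ) 1 := Ioc_subset_Icc_self hm
  obtain ⟨t, ht, hlt⟩ := exists_sub_lt_sub_of_deriv_eq hb₂ hb h₁ h₂ hm (hu₁ m hmI) (hu₂ m hmI)
    (sub_nonpos.1 hφm) hcrit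
  exact hlt.not_ge (hmin ⟨ht.1, ht.2.le.trans hm.2⟩)

end ClassicalSolution

/-- the minimizer is pointwise monotone in `b`: if `b₂ > b₁ > 0`
then `θ_{b₂} ≥ θ_{b₁}` on `[0,1]` and `θ_{b₂} > θ_{b₁}` on `(0,1]`. -/
theorem minimizer_monotone_in_b (b₁ b₂ : ℝ) (hb₁ : 0 < b₁) (hb : b₁ < b₂)
    (θ₁ θ₁' θ₂ θ₂' : ℝ → ℝ)
    (hmin₁ : IsMinimizer b₁ θ₁ θ₁') (hmin₂ : IsMinimizer b₂ θ₂ θ₂')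
    (hr₁ : ∀ s ∈ Set.Icc (0:ℝ) 1, θ₁ s ∈ Set.Ico 0 (π / 2))
    (hr₂ : ∀ s ∈ Set.Icc (0:ℝ) 1, θ₂ s ∈ Set.Ico 0 (π / 2)) :
    (∀ s ∈ Set.Icc (0:ℝ) 1, θ₁ s ≤ θ₂ s) ∧
    (∀ s ∈ Set.Ioc (0:ℝ) 1, θ₁ s < θ₂ s) := by
  obtain ⟨u₁, hu₁, hθu₁⟩ := hmin₁.exists_classicalSolution
  obtain ⟨u₂, hu₂, hθu₂⟩ := hmin₂.exists_classicalSolution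
  have hlt := hu₁.lt_of_coeff_lt (hb₁.trans hb).le hb hu₂
    (fun s hs => hθu₁ hs ▸ (hr₁ s hs).2) (fun s hs => hθu₂ hs ▸ (hr₂ s hs).1)
  have hstrict : ∀ s ∈ Ioc (0:ℝ) 1, θ₁ s < θ₂ s := fun s hs => by
    rw [hθu₁ (Ioc_subset_Icc_self hs), hθu₂ (Ioc_subset_Icc_self hs)]
    exact hlt s hs
  refine ⟨fun s hs => ?_, hstrict⟩
  rcases hs.1.eq_or_lt with rfl | hs₀
  · rw [hθu₁ hs, hθu₂ hs, hu₁.2.1, hu₂.2.1]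
  · exact (hstrict s ⟨hs₀, hs.2⟩).le
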